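/- Let n ≥ 3 and let K = K(a,b) be a K-generator with positive parameters a_1,…,a_{n−2}, b_1,…,b_{n−1}. Then |K_{[1,n−1],[1,n−1]}| = 0, |K_{[2,n],[2,n]}| = 0, and det K = −a_1·a_2⋯a_{n−2}·b_1·b_2⋯b_{n−1}. -/
import Mathlib


open Matrix

/-- The quantity `X = Σ_{k=1}^{n-2} (∏_{ℓ=2}^{k} b_{ℓ-1})(∏_{ℓ=k+1}^{n-2} a_ℓ)`
(written 0-based: the 1-based `a_j`, `b_j` are `a (j-1)`, `b (j-1)` here). -/
noncomputable def KgenX (n : ℕ) (a b : ℕ → ℝ) : ℝ :=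
  ∑ k ∈ Finset.range (n - 2),
    (∏ m ∈ Finset.range k, b m) * ∏ m ∈ Finset.Ico (k + 1) (n - 2), a m

/-- The quantity `Y = b_1 ⋯ b_{n-2}` (0-based: `b 0 ⋯ b (n-3)`). -/
noncomputable def KgenY (n : ℕ) (b : ℕ → ℝ) : ℝ := ∏ m ∈ Finset.range (n - 2), b m

/-- The `K`-generator `K(a, b)`, an `n × n` tridiagonal matrix (0-based indexing of
the parameters: the 1-based `a_j`, `b_j` are `a (j-1)`, `b (j-1)`): diagonal entries
`a_1, a_2 + b_1, …, a_{n-2} + b_{n-3}, b_{n-2}, b_{n-1}·X`; superdiagonal entries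
`a_1 b_1, …, a_{n-2} b_{n-2}, b_{n-1}·Y`; subdiagonal entries `1`. -/
noncomputable def Kgen (n : ℕ) (a b : ℕ → ℝ) : Matrix (Fin n) (Fin n) ℝ :=
  fun p q =>
    if (p : ℕ) + 1 = n ∧ (q : ℕ) + 1 = n then b (n - 2) * KgenX n a b
    else if (p : ℕ) + 2 = n ∧ (q : ℕ) + 2 = n then b (n - 3)
    else if (p : ℕ) = (q : ℕ) ∧ (p : ℕ) = 0 then a 0
    else if (p : ℕ) = (q : ℕ) then a p + b ((p : ℕ) - 1)
    else if (p : ℕ) + 2 = n ∧ (q : ℕ) + 1 = n then b (n - 2) * KgenY n b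
    else if (q : ℕ) = (p : ℕ) + 1 then a p * b p
    else if (p : ℕ) = (q : ℕ) + 1 then 1
    else 0

/-- The solid minor of `M` on rows `i, …, i+j-1` and columns `i, …, i+j-1` (0-based). -/
def contigMinor {n : ℕ} (M : Matrix (Fin n) (Fin n) ℝ) (i j : ℕ) (h : i + j ≤ n) : ℝ :=
  (M.submatrix (fun t : Fin j => (⟨i + (t : ℕ), by omega⟩ : Fin n))
               (fun t : Fin j => (⟨i + (t : ℕ), by omega⟩ : Fin n))).det

section Aux

lemma contigMinor_j_congr {n : ℕ} (M : Matrix (Fin n) (Fin n) ℝ) {i j j' : ℕ}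
    (hj : j = j') (h : i + j ≤ n) (h' : i + j' ≤ n) :
    contigMinor M i j h = contigMinor M i j' h' := by subst hj; rfl

lemma contig_expand {n : ℕ} (M : Matrix (Fin n) (Fin n) ℝ) (i j : ℕ) (h : i + (j + 2) ≤ n)
    (hrow : ∀ q (hq : q < n), i + 2 ≤ q → q < i + j + 2 → M ⟨i, by omega⟩ ⟨q, hq⟩ = 0)
    (hcol : ∀ p (hp : p < n), i + 2 ≤ p → p < i + j + 2 → M ⟨p, hp⟩ ⟨i, by omega⟩ = 0) :
    contigMinor M i (j + 2) h =
      M ⟨i, by omega⟩ ⟨i, by omega⟩ * contigMinor M (i+1) (j+1) (by omega) -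
      M ⟨i, by omega⟩ ⟨i+1, by omega⟩ * M ⟨i+1, by omega⟩ ⟨i, by omega⟩ *
        contigMinor M (i+2) j (by omega) := by
  rw [contigMinor, Matrix.det_succ_row_zero, Fin.sum_univ_succ, Fin.sum_univ_succ]
  set N : Matrix (Fin (j+2)) (Fin (j+2)) ℝ :=
    M.submatrix (fun t : Fin (j+2) => (⟨i + (t : ℕ), by omega⟩ : Fin n))
                (fun t : Fin (j+2) => (⟨i + (t : ℕ), by omega⟩ : Fin n)) with hN
  have htail : ∀ t : Fin j, N 0 t.succ.succ = 0 := by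
    intro t
    rw [hN]
    simp only [Matrix.submatrix_apply]
    exact hrow _ _ (by simp only [Fin.val_succ]; omega)
      (by have := t.isLt; simp only [Fin.val_succ]; omega)
  rw [Finset.sum_eq_zero (fun t _ => by rw [htail t]; ring)]
  have h00 : N 0 0 = M ⟨i, by omega⟩ ⟨i, by omega⟩ := by
    rw [hN]; simp only [Matrix.submatrix_apply]
    congr 1 <;> exact Fin.ext (by simp)
  have h01 : N 0 (0 : Fin (j+1)).succ = M ⟨i, by omega⟩ ⟨i+1, by omega⟩ := by
    rw [hN]; simp only [Matrix.submatrix_apply]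
    congr 1
  have hsub0 : (N.submatrix Fin.succ (Fin.succAbove 0)).det
      = contigMinor M (i+1) (j+1) (by omega) := by
    rw [Fin.succAbove_zero, hN, Matrix.submatrix_submatrix, contigMinor]
    congr 1
    ext s t
    simp only [Matrix.submatrix_apply, Function.comp_apply]
    congr 1 <;> exact Fin.ext (by simp [Fin.val_succ]; omega)
  -- the (0,1) cofactor
  set B : Matrix (Fin (j+1)) (Fin (j+1)) ℝ :=
    N.submatrix Fin.succ (Fin.succAbove (0 : Fin (j+1)).succ) with hB
  have hBdet : B.det = M ⟨i+1, by omega⟩ ⟨i, by omega⟩ * contigMinor M (i+2) j (by omega) := by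
    rw [Matrix.det_succ_column_zero, Fin.sum_univ_succ]
    have hBtail : ∀ t : Fin j, B t.succ 0 = 0 := by
      intro t
      rw [hB]
      simp only [Matrix.submatrix_apply]
      rw [show ((0 : Fin (j+1)).succ).succAbove 0 = 0 by
        rw [Fin.succAbove_of_castSucc_lt] <;> simp [Fin.lt_def]]
      rw [hN]
      simp only [Matrix.submatrix_apply]
      exact hcol _ _ (by simp only [Fin.val_succ]; omega)
        (by have := t.isLt; simp only [Fin.val_succ]; omega)
    rw [Finset.sum_eq_zero (fun t _ => by rw [hBtail t]; ring)]
    have hB00 : B 0 0 = M ⟨i+1, by omega⟩ ⟨i, by omega⟩ := by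
      rw [hB]
      simp only [Matrix.submatrix_apply]
      rw [show ((0 : Fin (j+1)).succ).succAbove 0 = 0 by
        rw [Fin.succAbove_of_castSucc_lt] <;> simp [Fin.lt_def]]
      rw [hN]
      simp only [Matrix.submatrix_apply]
      congr 1 <;> exact Fin.ext (by simp)
    have hBsub : (B.submatrix (Fin.succAbove 0) Fin.succ).det
        = contigMinor M (i+2) j (by omega) := by
      rw [Fin.succAbove_zero, hB, Matrix.submatrix_submatrix, hN, Matrix.submatrix_submatrix,
        contigMinor]
      congr 1
      ext s t
      simp only [Matrix.submatrix_apply, Function.comp_apply]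
      have hval : (((0 : Fin (j+1)).succ).succAbove t.succ : Fin (j+2)) = t.succ.succ := by
        rw [Fin.succAbove_of_le_castSucc]; rw [Fin.le_def]; simp
      congr 1
      · exact Fin.ext (by simp [Fin.val_succ]; omega)
      · exact Fin.ext (by have hv := congrArg Fin.val hval; simp [Fin.val_succ] at hv ⊢; omega)
    rw [hB00, hBsub]
    simp
  rw [h00, h01, hsub0, hBdet]
  simp [Fin.val_succ]
  ring

lemma contig_zero {n : ℕ} (M : Matrix (Fin n) (Fin n) ℝ) (i : ℕ) (h : i + 0 ≤ n) :
    contigMinor M i 0 h = 1 := Matrix.det_fin_zero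

lemma contig_one {n : ℕ} (M : Matrix (Fin n) (Fin n) ℝ) (i : ℕ) (h : i + 1 ≤ n) :
    contigMinor M i 1 h = M ⟨i, by omega⟩ ⟨i, by omega⟩ := by
  rw [contigMinor, Matrix.det_fin_one, Matrix.submatrix_apply]
  congr 1 <;> exact Fin.ext (by simp)

lemma contig_two {n : ℕ} (M : Matrix (Fin n) (Fin n) ℝ) (i : ℕ) (h : i + 2 ≤ n) :
    contigMinor M i 2 h = M ⟨i, by omega⟩ ⟨i, by omega⟩ * M ⟨i+1, by omega⟩ ⟨i+1, by omega⟩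
      - M ⟨i, by omega⟩ ⟨i+1, by omega⟩ * M ⟨i+1, by omega⟩ ⟨i, by omega⟩ := by
  rw [contigMinor, Matrix.det_fin_two]
  simp only [Matrix.submatrix_apply, Fin.isValue, Fin.val_zero, Fin.val_one, Nat.add_zero]

lemma contig_full {n : ℕ} (M : Matrix (Fin n) (Fin n) ℝ) (h : 0 + n ≤ n) :
    contigMinor M 0 n h = M.det := by
  rw [contigMinor]
  have hf : (fun t : Fin n => (⟨0 + (t : ℕ), by omega⟩ : Fin n)) = id :=
    funext fun t => Fin.ext (by simp)
  rw [hf, Matrix.submatrix_id_id]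

end Aux

section Entries

variable {n : ℕ} (hn : 3 ≤ n) (a b : ℕ → ℝ)
include hn

lemma K00 : Kgen n a b ⟨0, by omega⟩ ⟨0, by omega⟩ = a 0 := by
  simp only [Kgen]
  split_ifs <;> simp_all <;> omega

omit hn in
lemma Kdiag (p : ℕ) (h1 : 1 ≤ p) (h2 : p + 3 ≤ n) :
    Kgen n a b ⟨p, by omega⟩ ⟨p, by omega⟩ = a p + b (p - 1) := by
  simp only [Kgen]
  split_ifs <;> first | rfl | (exfalso; omega)

lemma Kn2 : Kgen n a b ⟨n-2, by omega⟩ ⟨n-2, by omega⟩ = b (n - 3) := by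
  simp only [Kgen]
  split_ifs <;> first | rfl | (exfalso; omega)

lemma Kn1 : Kgen n a b ⟨n-1, by omega⟩ ⟨n-1, by omega⟩ = b (n - 2) * KgenX n a b := by
  simp only [Kgen]
  split_ifs <;> first | rfl | (exfalso; omega)

omit hn in
lemma Ksup (p : ℕ) (h2 : p + 3 ≤ n) :
    Kgen n a b ⟨p, by omega⟩ ⟨p+1, by omega⟩ = a p * b p := by
  simp only [Kgen]
  split_ifs <;> first | rfl | (exfalso; omega)

lemma KsupY : Kgen n a b ⟨n-2, by omega⟩ ⟨n-1, by omega⟩ = b (n - 2) * KgenY n b := by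
  simp only [Kgen]
  split_ifs <;> first | rfl | (exfalso; omega)

omit hn in
lemma Ksub (p : ℕ) (h2 : p + 2 ≤ n) :
    Kgen n a b ⟨p+1, by omega⟩ ⟨p, by omega⟩ = 1 := by
  simp only [Kgen]
  split_ifs <;> first | rfl | (exfalso; omega)

omit hn in
lemma Kzero (p q : ℕ) (hp : p < n) (hq : q < n) (hpq : p + 2 ≤ q ∨ q + 2 ≤ p) :
    Kgen n a b ⟨p, hp⟩ ⟨q, hq⟩ = 0 := by
  simp only [Kgen]
  split_ifs <;> first | rfl | (exfalso; omega)

end Entries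

/-- Auxiliary sum `T_i` (1-based row `i`): determinant of the generic block on rows
`i, …, n-3` (0-based). -/
noncomputable def KgenT (n : ℕ) (a b : ℕ → ℝ) (i : ℕ) : ℝ :=
  ∑ k ∈ Finset.range (n - 1 - i),
    (∏ m ∈ Finset.Ico (i-1) (i-1+k), b m) * ∏ m ∈ Finset.Ico (i+k) (n-2), a m

section TT

variable {n : ℕ} (hn : 3 ≤ n) (a b : ℕ → ℝ)

include hn in
lemma KgenT_n2 : KgenT n a b (n-2) = 1 := by
  rw [KgenT, show n - 1 - (n-2) = 1 by omega, Finset.sum_range_one]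
  simp

include hn in
lemma KgenT_n1 : KgenT n a b (n-1) = 0 := by
  rw [KgenT, show n - 1 - (n-1) = 0 by omega]
  simp

omit hn in
lemma KgenT_peel (i : ℕ) (h1 : 1 ≤ i) (h2 : i + 3 ≤ n) :
    KgenT n a b i = b (i-1) * KgenT n a b (i+1)
      + a i * ∏ m ∈ Finset.Ico (i+1) (n-2), a m := by
  rw [KgenT, show n - 1 - i = (n - 1 - (i+1)) + 1 by omega, Finset.sum_range_succ']
  rw [KgenT, Finset.mul_sum]
  congr 1
  · apply Finset.sum_congr rfl
    intro k _
    rw [Finset.prod_eq_prod_Ico_succ_bot (show i-1 < i-1+(k+1) by omega) b]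
    rw [show i-1+1 = i by omega, show i-1+(k+1) = i + k by omega,
      show i+(k+1) = i+1+k by omega, show i+1-1 = i by omega]
    ring
  · simp only [Nat.add_zero, Finset.Ico_self, Finset.prod_empty, one_mul]
    rw [Finset.prod_eq_prod_Ico_succ_bot (show i < n-2 by omega) a]

include hn in
lemma KgenT_rec (i : ℕ) (h1 : 1 ≤ i) (h2 : i + 3 ≤ n) :
    KgenT n a b i = (a i + b (i-1)) * KgenT n a b (i+1)
      - a i * b i * KgenT n a b (i+2) := by
  rcases Nat.lt_or_ge (i+3) n with h | h
  · have p1 := KgenT_peel (n := n) a b i h1 h2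
    have p2 := KgenT_peel (n := n) a b (i+1) (by omega) (by omega)
    rw [show i+1-1 = i by omega] at p2
    have hI : ∏ m ∈ Finset.Ico (i+1) (n-2), a m
        = a (i+1) * ∏ m ∈ Finset.Ico (i+1+1) (n-2), a m :=
      Finset.prod_eq_prod_Ico_succ_bot (by omega) a
    rw [p1, p2, hI, show i+1+1 = i+2 by omega]
    ring
  · have hn3 : i + 3 = n := by omega
    have p1 := KgenT_peel (n := n) a b i h1 h2
    rw [p1, show i+1 = n-2 by omega, show i+2 = n-1 by omega, KgenT_n2 hn a b, KgenT_n1 hn a b,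
      Finset.Ico_self, Finset.prod_empty]
    ring

omit hn in
lemma KgenT_one (hn : 3 ≤ n) : KgenT n a b 1 = KgenX n a b := by
  rw [KgenT, KgenX, show n - 1 - 1 = n - 2 by omega]
  apply Finset.sum_congr rfl
  intro k _
  rw [show (1:ℕ) - 1 = 0 by rfl, Nat.zero_add, show 1+k = k+1 by omega, Finset.range_eq_Ico]

end TT

section Claims

variable {n : ℕ} (hn : 3 ≤ n) (a b : ℕ → ℝ)
include hn

lemma claimB : ∀ j i (_h1 : 1 ≤ i) (_h2 : i + j = n - 1),
    contigMinor (Kgen n a b) i j (by omega) = ∏ m ∈ Finset.Ico (i-1) (n-2), b m := by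
  intro j
  induction j using Nat.strong_induction_on with
  | _ j ih =>
    match j with
    | 0 =>
      intro i h1 h2
      rw [contig_zero, show i - 1 = n-2 by omega, Finset.Ico_self, Finset.prod_empty]
    | 1 =>
      intro i h1 h2
      have hi : i = n - 2 := by omega
      subst hi
      rw [contig_one, Kn2 hn a b, show n-2-1 = n-3 by omega,
        Finset.prod_eq_prod_Ico_succ_bot (show n-3 < n-2 by omega) b,
        show n-3+1 = n-2 by omega, Finset.Ico_self, Finset.prod_empty, mul_one]
    | (j+2) =>
      intro i h1 h2
      rw [contig_expand (Kgen n a b) i j (by omega)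
        (fun q hq hq1 hq2 => Kzero (n := n) a b i q (by omega) hq (Or.inl (by omega)))
        (fun p hp hp1 hp2 => Kzero (n := n) a b p i hp (by omega) (Or.inr (by omega)))]
      rw [Kdiag (n := n) a b i h1 (by omega), Ksup (n := n) a b i (by omega), Ksub (n := n) a b i (by omega)]
      rw [ih (j+1) (by omega) (i+1) (by omega) (by omega),
        ih j (by omega) (i+2) (by omega) (by omega)]
      rw [show i+1-1 = i by omega, show i+2-1 = i+1 by omega]
      have e1 : ∏ m ∈ Finset.Ico i (n-2), b m = b i * ∏ m ∈ Finset.Ico (i+1) (n-2), b m :=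
        Finset.prod_eq_prod_Ico_succ_bot (by omega) b
      have e2 : ∏ m ∈ Finset.Ico (i-1) (n-2), b m = b (i-1) * ∏ m ∈ Finset.Ico i (n-2), b m := by
        rw [Finset.prod_eq_prod_Ico_succ_bot (show i-1 < n-2 by omega) b, show i-1+1 = i by omega]
      rw [e2, e1]
      ring

lemma claimC : ∀ j i (_h1 : 1 ≤ i) (_h0 : 1 ≤ j) (_h2 : i + j = n),
    contigMinor (Kgen n a b) i j (by omega) =
      b (n-2) * (KgenX n a b * ∏ m ∈ Finset.Ico (i-1) (n-2), b m
        - KgenY n b * KgenT n a b i) := by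
  intro j
  induction j using Nat.strong_induction_on with
  | _ j ih =>
    match j with
    | 0 => intro i h1 h0 h2; omega
    | 1 =>
      intro i h1 h0 h2
      have hi : i = n - 1 := by omega
      subst hi
      rw [contig_one, Kn1 hn a b, show n-1-1 = n-2 by omega, Finset.Ico_self,
        Finset.prod_empty, KgenT_n1 hn a b]
      ring
    | 2 =>
      intro i h1 h0 h2
      have hi : i = n - 2 := by omega
      subst hi
      rw [contig_two]
      simp only [show n-2+1 = n-1 by omega]
      rw [Kn2 hn a b, Kn1 hn a b, KsupY hn a b]
      rw [show Kgen n a b ⟨n-1, by omega⟩ ⟨n-2, by omega⟩ = 1 by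
        have := Ksub (n := n) a b (n-2) (by omega)
        simpa only [show n-2+1 = n-1 by omega] using this]
      rw [show n-2-1 = n-3 by omega,
        Finset.prod_eq_prod_Ico_succ_bot (show n-3 < n-2 by omega) b,
        show n-3+1 = n-2 by omega, Finset.Ico_self, Finset.prod_empty, mul_one,
        KgenT_n2 hn a b]
      ring
    | (j+3) =>
      intro i h1 h0 h2
      rw [contigMinor_j_congr (Kgen n a b) (show j+3 = (j+1)+2 by omega) (by omega) (by omega)]
      rw [contig_expand (Kgen n a b) i (j+1) (by omega)
        (fun q hq hq1 hq2 => Kzero (n := n) a b i q (by omega) hq (Or.inl (by omega)))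
        (fun p hp hp1 hp2 => Kzero (n := n) a b p i hp (by omega) (Or.inr (by omega)))]
      rw [Kdiag (n := n) a b i h1 (by omega), Ksup (n := n) a b i (by omega), Ksub (n := n) a b i (by omega)]
      rw [ih (j+2) (by omega) (i+1) (by omega) (by omega) (by omega),
        ih (j+1) (by omega) (i+2) (by omega) (by omega) (by omega)]
      rw [show i+1-1 = i by omega, show i+2-1 = i+1 by omega]
      have e1 : ∏ m ∈ Finset.Ico i (n-2), b m = b i * ∏ m ∈ Finset.Ico (i+1) (n-2), b m :=
        Finset.prod_eq_prod_Ico_succ_bot (by omega) b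
      have e2 : ∏ m ∈ Finset.Ico (i-1) (n-2), b m = b (i-1) * ∏ m ∈ Finset.Ico i (n-2), b m := by
        rw [Finset.prod_eq_prod_Ico_succ_bot (show i-1 < n-2 by omega) b, show i-1+1 = i by omega]
      rw [KgenT_rec (n := n) hn a b i h1 (by omega), e2, e1]
      ring

end Claims

/-- The two large corner principal minors of a `K`-generator vanish, and its
determinant equals `-a_1 ⋯ a_{n-2} · b_1 ⋯ b_{n-1}`. -/
theorem Kgen_minors (n : ℕ) (hn : 3 ≤ n) (a b : ℕ → ℝ)
    (ha : ∀ i, i < n - 2 → 0 < a i) (hb : ∀ i, i < n - 1 → 0 < b i) :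
    contigMinor (Kgen n a b) 0 (n - 1) (by omega) = 0 ∧
    contigMinor (Kgen n a b) 1 (n - 1) (by omega) = 0 ∧
    (Kgen n a b).det =
      -((∏ m ∈ Finset.range (n - 2), a m) * ∏ m ∈ Finset.range (n - 1), b m) := by
  have hY : ∏ m ∈ Finset.Ico 0 (n-2), b m = KgenY n b := by
    rw [KgenY, Finset.range_eq_Ico]
  have hR2 : contigMinor (Kgen n a b) 1 (n - 1) (by omega) = 0 := by
    rw [claimC hn a b (n-1) 1 (by omega) (by omega) (by omega)]
    rw [show (1:ℕ) - 1 = 0 by rfl, hY, KgenT_one a b hn]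
    ring
  refine ⟨?_, hR2, ?_⟩
  · -- the top-left (n-1)×(n-1) minor
    rw [contigMinor_j_congr (Kgen n a b) (show n-1 = (n-3)+2 by omega) (by omega) (by omega)]
    rw [contig_expand (Kgen n a b) 0 (n-3) (by omega)
      (fun q hq hq1 hq2 => Kzero (n := n) a b 0 q (by omega) hq (Or.inl (by omega)))
      (fun p hp hp1 hp2 => Kzero (n := n) a b p 0 hp (by omega) (Or.inr (by omega)))]
    rw [K00 hn a b, Ksup (n := n) a b 0 (by omega), Ksub (n := n) a b 0 (by omega)]
    rw [claimB hn a b (n-3+1) (0+1) (by omega) (by omega),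
      claimB hn a b (n-3) (0+2) (by omega) (by omega)]
    rw [show (0:ℕ)+1-1 = 0 by rfl, show (0:ℕ)+2-1 = 1 by rfl]
    rw [Finset.prod_eq_prod_Ico_succ_bot (show 0 < n-2 by omega) b, Nat.zero_add]
    ring
  · -- the determinant
    have hX : KgenX n a b = b 0 * KgenT n a b 2 + ∏ m ∈ Finset.Ico 1 (n-2), a m := by
      rcases Nat.lt_or_ge 3 n with h | h
      · have p := KgenT_peel (n := n) a b 1 (by omega) (by omega)
        rw [KgenT_one a b hn] at p
        rw [p, show (1:ℕ)-1 = 0 by rfl, show (1:ℕ)+1 = 2 by rfl,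
          Finset.prod_eq_prod_Ico_succ_bot (show 1 < n-2 by omega) a]
      · have hn3 : n = 3 := by omega
        subst hn3
        norm_num [KgenX, KgenT]
    rw [← contig_full (Kgen n a b) (by omega)]
    rw [contigMinor_j_congr (Kgen n a b) (show n = (n-2)+2 by omega) (by omega) (by omega)]
    rw [contig_expand (Kgen n a b) 0 (n-2) (by omega)
      (fun q hq hq1 hq2 => Kzero (n := n) a b 0 q (by omega) hq (Or.inl (by omega)))
      (fun p hp hp1 hp2 => Kzero (n := n) a b p 0 hp (by omega) (Or.inr (by omega)))]
    rw [K00 hn a b, Ksup (n := n) a b 0 (by omega), Ksub (n := n) a b 0 (by omega)]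
    have h1 : contigMinor (Kgen n a b) (0+1) (n-2+1) (by omega) = 0 := by
      rw [contigMinor_j_congr (Kgen n a b) (show n-2+1 = n-1 by omega) (by omega) (by omega)]
      exact hR2
    rw [h1]
    rw [claimC hn a b (n-2) (0+2) (by omega) (by omega) (by omega)]
    rw [show (0:ℕ)+2-1 = 1 by rfl, show (0:ℕ)+2 = 2 by rfl]
    have hY2 : KgenY n b = b 0 * ∏ m ∈ Finset.Ico 1 (n-2), b m := by
      rw [KgenY, Finset.range_eq_Ico, Finset.prod_eq_prod_Ico_succ_bot (show 0 < n-2 by omega) b,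
        Nat.zero_add]
    have hA : ∏ m ∈ Finset.range (n-2), a m = a 0 * ∏ m ∈ Finset.Ico 1 (n-2), a m := by
      rw [Finset.range_eq_Ico, Finset.prod_eq_prod_Ico_succ_bot (show 0 < n-2 by omega) a,
        Nat.zero_add]
    have hBp : ∏ m ∈ Finset.range (n-1), b m = (∏ m ∈ Finset.range (n-2), b m) * b (n-2) := by
      rw [show n-1 = (n-2)+1 by omega, Finset.prod_range_succ]
    rw [hX, hA, hBp, show (∏ m ∈ Finset.range (n-2), b m) = KgenY n b from rfl, hY2]
    ring
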